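/- Let X, Z, and U be finite random variables on a Bayesian network such that X is conditionally independent of U given Z. Then for any function d of (X, Z) there is a function d' of Z alone such that E[f(d'(Z), Z, U)] ≥ E[f(d(X,Z), Z, U)] for any bounded real function f; i.e., decisions need not depend on variables conditionally independent of the payoff-relevant variable. -/

import Mathlib

/-!
Slice the expectation along the values `z` of `Z`. On the slice `Z = z`, conditional
independence says that conditioning further on `X = x` does not change the law of `U`, so the
payoff of a rule `x ↦ c x` is the `P(X = x | Z = z)`-weighted average of the payoffs of the
constant rules `c x`. An average is at most its maximum, so the best constant decision on the
slice does at least as well, and `d' z` is chosen to be it.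
-/

open Finset

theorem sum_mul_eq_sum_image_sum_ite {Ω α R : Type*} [Fintype Ω] [DecidableEq α]
    [NonUnitalNonAssocSemiring R] (w : Ω → R) (g : Ω → α) (F : Ω → α → R) :
    ∑ ω, w ω * F ω (g ω) = ∑ a ∈ univ.image g, ∑ ω, (if g ω = a then w ω else 0) * F ω a := by
  rw [sum_comm]
  refine sum_congr rfl fun ω _ => ?_
  simp only [ite_mul, zero_mul]
  rw [sum_ite_eq, if_pos (mem_image_of_mem g (mem_univ ω))]

section Independence

/- The weights `q` are not normalized (they will be `p` restricted to a slice `Z = z`), so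
independence is stated with the total mass `∑ ω, q ω` in place of the denominators. -/
variable {Ω 𝓧 𝓤 : Type*} [Fintype Ω] [DecidableEq 𝓧] [DecidableEq 𝓤]
  (q : Ω → ℝ) (X : Ω → 𝓧) (U : Ω → 𝓤)

theorem sum_ite_mul_mul_sum_eq_of_indep
    (hind : ∀ x u, (∑ ω, if X ω = x ∧ U ω = u then q ω else 0) * ∑ ω, q ω =
      (∑ ω, if X ω = x then q ω else 0) * ∑ ω, if U ω = u then q ω else 0)
    (x : 𝓧) (h : 𝓤 → ℝ) :
    (∑ ω, (if X ω = x then q ω else 0) * h (U ω)) * ∑ ω, q ω =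
      (∑ ω, if X ω = x then q ω else 0) * ∑ ω, q ω * h (U ω) := by
  have hXU : ∀ u ω, (if U ω = u then (if X ω = x then q ω else 0) else 0) =
      if X ω = x ∧ U ω = u then q ω else 0 := fun u ω => by
    by_cases hx : X ω = x <;> simp [hx]
  calc (∑ ω, (if X ω = x then q ω else 0) * h (U ω)) * ∑ ω, q ω
      = (∑ u ∈ univ.image U, (∑ ω, if X ω = x ∧ U ω = u then q ω else 0) * h u) * ∑ ω, q ω := by
        simp only [sum_mul_eq_sum_image_sum_ite _ U fun _ u => h u, ← sum_mul, hXU]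
    _ = ∑ u ∈ univ.image U,
          (∑ ω, if X ω = x then q ω else 0) * (∑ ω, if U ω = u then q ω else 0) * h u := by
        rw [sum_mul]
        refine sum_congr rfl fun u _ => ?_
        rw [mul_right_comm, hind]
    _ = (∑ ω, if X ω = x then q ω else 0) * ∑ ω, q ω * h (U ω) := by
        rw [sum_mul_eq_sum_image_sum_ite q U fun _ u => h u, mul_sum]
        simp only [← sum_mul, mul_assoc]

theorem exists_sum_mul_le_of_indep {𝓓 : Type*} [Fintype 𝓓] [Nonempty 𝓓] (hq : ∀ ω, 0 ≤ q ω)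
    (hind : 0 < ∑ ω, q ω → ∀ x u, (∑ ω, if X ω = x ∧ U ω = u then q ω else 0) * ∑ ω, q ω =
      (∑ ω, if X ω = x then q ω else 0) * ∑ ω, if U ω = u then q ω else 0)
    (g : 𝓓 → 𝓤 → ℝ) (c : 𝓧 → 𝓓) :
    ∃ a, ∑ ω, q ω * g (c (X ω)) (U ω) ≤ ∑ ω, q ω * g a (U ω) := by
  obtain ⟨a, -, ha⟩ :=
    exists_max_image univ (fun b => ∑ ω, q ω * g b (U ω)) univ_nonempty
  refine ⟨a, ?_⟩
  rcases (sum_nonneg fun ω _ => hq ω).eq_or_lt with hm | hm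
  · have hq0 : ∀ ω, q ω = 0 := fun ω =>
      (sum_eq_zero_iff_of_nonneg fun ω _ => hq ω).mp hm.symm ω (mem_univ ω)
    simp [hq0]
  have hqX : ∀ x, 0 ≤ ∑ ω, if X ω = x then q ω else 0 := fun x =>
    sum_nonneg fun ω _ => by split_ifs <;> simp [hq ω]
  have hmass : ∑ x ∈ univ.image X, ∑ ω, (if X ω = x then q ω else 0) = ∑ ω, q ω := by
    simpa only [mul_one] using (sum_mul_eq_sum_image_sum_ite q X fun _ _ => (1 : ℝ)).symm
  rw [← mul_le_mul_iff_left₀ hm]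
  calc (∑ ω, q ω * g (c (X ω)) (U ω)) * ∑ ω, q ω
      = ∑ x ∈ univ.image X, (∑ ω, (if X ω = x then q ω else 0) * g (c x) (U ω)) * ∑ ω, q ω := by
        rw [sum_mul_eq_sum_image_sum_ite q X fun ω x => g (c x) (U ω), sum_mul]
    _ = ∑ x ∈ univ.image X, (∑ ω, if X ω = x then q ω else 0) * ∑ ω, q ω * g (c x) (U ω) :=
        sum_congr rfl fun x _ => sum_ite_mul_mul_sum_eq_of_indep q X U (hind hm) x (g (c x))
    _ ≤ ∑ x ∈ univ.image X, (∑ ω, if X ω = x then q ω else 0) * ∑ ω, q ω * g a (U ω) :=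
        sum_le_sum fun x _ => mul_le_mul_of_nonneg_left (ha _ (mem_univ _)) (hqX x)
    _ = (∑ ω, q ω * g a (U ω)) * ∑ ω, q ω := by rw [← sum_mul, hmass, mul_comm]

end Independence

open Classical in
theorem stmt17_general {Ω 𝓧 𝓩 𝓤 𝓓 : Type} [Fintype Ω] [Nonempty 𝓓] [Fintype 𝓓]
    (p : Ω → ℝ) (hp : ∀ ω, 0 ≤ p ω)
    (X : Ω → 𝓧) (Z : Ω → 𝓩) (U : Ω → 𝓤)
    (hCI : ∀ (x : 𝓧) (z : 𝓩) (u : 𝓤),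
      0 < (∑ ω, if Z ω = z then p ω else 0) →
      (∑ ω, if X ω = x ∧ U ω = u ∧ Z ω = z then p ω else 0) *
          (∑ ω, if Z ω = z then p ω else 0) =
        (∑ ω, if X ω = x ∧ Z ω = z then p ω else 0) *
          (∑ ω, if U ω = u ∧ Z ω = z then p ω else 0))
    (d : 𝓧 → 𝓩 → 𝓓) (f : 𝓓 → 𝓩 → 𝓤 → ℝ) :
    ∃ d' : 𝓩 → 𝓓,
      ∑ ω, p ω * f (d (X ω) (Z ω)) (Z ω) (U ω) ≤
        ∑ ω, p ω * f (d' (Z ω)) (Z ω) (U ω) := by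
  have hslice : ∀ z, ∃ a, ∑ ω, (if Z ω = z then p ω else 0) * f (d (X ω) z) z (U ω) ≤
      ∑ ω, (if Z ω = z then p ω else 0) * f a z (U ω) := fun z =>
    exists_sum_mul_le_of_indep _ X U (fun ω => by split_ifs <;> simp [hp ω])
      (fun hpos x u => by simpa only [ite_and] using hCI x z u hpos) (f · z) (d · z)
  choose d' hd' using hslice
  refine ⟨d', ?_⟩
  rw [sum_mul_eq_sum_image_sum_ite p Z fun ω z => f (d (X ω) z) z (U ω),
    sum_mul_eq_sum_image_sum_ite p Z fun ω z => f (d' z) z (U ω)]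
  exact sum_le_sum fun z _ => hd' z

open Classical in
/-- On a finite probability space, let `X`, `Z`, `U` be random variables with `X`
conditionally independent of `U` given `Z`. Then for any decision rule `d` depending on
`(X, Z)` and any (bounded) real payoff function `f`, there is a decision rule `d'`
depending on `Z` alone doing at least as well:
`E[f(d'(Z), Z, U)] ≥ E[f(d(X, Z), Z, U)]`. -/
theorem stmt17 {Ω 𝓧 𝓩 𝓤 𝓓 : Type} [Fintype Ω] [Nonempty 𝓓] [Fintype 𝓓]
    (p : Ω → ℝ) (hp : ∀ ω, 0 ≤ p ω) (hsum : ∑ ω, p ω = 1)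
    (X : Ω → 𝓧) (Z : Ω → 𝓩) (U : Ω → 𝓤)
    (hCI : ∀ (x : 𝓧) (z : 𝓩) (u : 𝓤),
      0 < (∑ ω, if Z ω = z then p ω else 0) →
      (∑ ω, if X ω = x ∧ U ω = u ∧ Z ω = z then p ω else 0) *
          (∑ ω, if Z ω = z then p ω else 0) =
        (∑ ω, if X ω = x ∧ Z ω = z then p ω else 0) *
          (∑ ω, if U ω = u ∧ Z ω = z then p ω else 0))
    (d : 𝓧 → 𝓩 → 𝓓) (f : 𝓓 → 𝓩 → 𝓤 → ℝ) :
    ∃ d' : 𝓩 → 𝓓,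
      ∑ ω, p ω * f (d (X ω) (Z ω)) (Z ω) (U ω) ≤
        ∑ ω, p ω * f (d' (Z ω)) (Z ω) (U ω) :=
  stmt17_general p hp X Z U hCI d f
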